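/- arXiv:1608.01619 — 2 statements merged into one kernel-verified Lean document; each statement's English description precedes it below -/
import Mathlib

section
/- Let A be a real m×n matrix and b ∈ ℝ^m. Let x, h ∈ ℝ^n satisfy the normal equations J(x)ᵀ(J(x)h + f(x)) = 0 and 1 − μ(x)² (xᵀh) ≠ 0, and set α = 1/(1 − μ(x)² (xᵀh)). Then f(x + α h) is orthogonal to J(x)h, i.e. (J(x)h)ᵀ f(x + α h) = 0. -/
open Matrix BigOperators

/-- μ(x) = (1 + xᵀx)^(−1/2). -/
noncomputable def mu {n : ℕ} (x : Fin n → ℝ) : ℝ := 1 / Real.sqrt (1 + x ⬝ᵥ x)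

/-- f(x) = μ(x)(Ax − b). -/
noncomputable def fTLS {m n : ℕ} (A : Matrix (Fin m) (Fin n) ℝ) (b : Fin m → ℝ)
    (x : Fin n → ℝ) : Fin m → ℝ := mu x • (A.mulVec x - b)

/-- Jacobian J(x) = μ(x) A − μ(x)³ (Ax − b) xᵀ. -/
noncomputable def jac {m n : ℕ} (A : Matrix (Fin m) (Fin n) ℝ) (b : Fin m → ℝ)
    (x : Fin n → ℝ) : Matrix (Fin m) (Fin n) ℝ :=
  mu x • A - (mu x) ^ 3 • Matrix.vecMulVec (A.mulVec x - b) x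

/-!
Write `r = Ax - b` and `β = 1 - μ(x)² xᵀh`. Then `J(x)h + f(x) = μ(x) (Ah + β r)`, while
`f(x + th) = μ(x + th) (r + t Ah)`. For `t = α = 1/β` the two vectors are parallel, so
`f(x + αh)` is a multiple of `J(x)h + f(x)`, which the normal equations make orthogonal to `J(x)h`.
-/

theorem Matrix.mulVec_dotProduct_eq_zero_of_transpose_mulVec_eq_zero {R ι κ : Type*}
    [CommSemiring R] [Fintype ι] [Fintype κ] (J : Matrix ι κ R) (h : κ → R) {v : ι → R}
    (hv : Jᵀ *ᵥ v = 0) : J *ᵥ h ⬝ᵥ v = 0 := by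
  rw [dotProduct_comm, dotProduct_mulVec, ← mulVec_transpose, hv, zero_dotProduct]

section TotalLeastSquares

variable {m n : ℕ} (A : Matrix (Fin m) (Fin n) ℝ) (b : Fin m → ℝ) (x h : Fin n → ℝ)

theorem mu_pos : 0 < mu x := by
  have : 0 ≤ x ⬝ᵥ x := by simpa using dotProduct_star_self_nonneg x
  unfold mu
  positivity

theorem jac_mulVec :
    jac A b x *ᵥ h = mu x • A *ᵥ h - (mu x ^ 3 * (x ⬝ᵥ h)) • (A *ᵥ x - b) := by
  rw [jac, sub_mulVec, smul_mulVec, smul_mulVec, vecMulVec_mulVec, op_smul_eq_smul, smul_smul]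

theorem jac_mulVec_add_fTLS :
    jac A b x *ᵥ h + fTLS A b x =
      mu x • (A *ᵥ h + (1 - mu x ^ 2 * (x ⬝ᵥ h)) • (A *ᵥ x - b)) := by
  rw [jac_mulVec, fTLS]
  ext i
  simp only [Pi.add_apply, Pi.sub_apply, Pi.smul_apply, smul_eq_mul]
  ring

theorem fTLS_add_smul (t : ℝ) :
    fTLS A b (x + t • h) = mu (x + t • h) • (A *ᵥ x - b + t • A *ᵥ h) := by
  rw [fTLS, mulVec_add, mulVec_smul, add_sub_right_comm]

theorem fTLS_add_smul_eq_smul_jac_mulVec_add_fTLS {t : ℝ}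
    (ht : t * (1 - mu x ^ 2 * (x ⬝ᵥ h)) = 1) :
    fTLS A b (x + t • h) = (mu (x + t • h) * t / mu x) • (jac A b x *ᵥ h + fTLS A b x) := by
  have hμ := (mu_pos x).ne'
  rw [jac_mulVec_add_fTLS, fTLS_add_smul, smul_smul]
  set r := A *ᵥ x - b
  ext i
  simp only [Pi.add_apply, Pi.smul_apply, smul_eq_mul]
  field_simp
  linear_combination (-(mu (x + t • h)) * r i) * ht

end TotalLeastSquares

theorem stmt_7 {m n : ℕ} (A : Matrix (Fin m) (Fin n) ℝ) (b : Fin m → ℝ)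
    (x h : Fin n → ℝ)
    (hnormal : (jac A b x)ᵀ.mulVec ((jac A b x).mulVec h + fTLS A b x) = 0)
    (hne : 1 - (mu x) ^ 2 * (x ⬝ᵥ h) ≠ 0)
    (α : ℝ) (hα : α = 1 / (1 - (mu x) ^ 2 * (x ⬝ᵥ h))) :
    (jac A b x).mulVec h ⬝ᵥ fTLS A b (x + α • h) = 0 := by
  have hαβ : α * (1 - mu x ^ 2 * (x ⬝ᵥ h)) = 1 := by rw [hα, one_div_mul_cancel hne]
  rw [fTLS_add_smul_eq_smul_jac_mulVec_add_fTLS A b x h hαβ, dotProduct_smul,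
    mulVec_dotProduct_eq_zero_of_transpose_mulVec_eq_zero _ _ hnormal, smul_zero]
end

section
/- Let C be a real p×q matrix with full column rank, and suppose the smallest eigenvalue σ_q² of the symmetric positive definite matrix CᵀC is simple and strictly smaller than all other eigenvalues, the second smallest being σ_{q−1}² (so 0 < σ_q < σ_{q−1}). Let v_q be a unit eigenvector of CᵀC for σ_q² and set u_q = (1/σ_q) C v_q. Let s₀ ∈ ℝ^q be a unit vector, define s_{k+1} = (CᵀC)^{−1} s_k / ‖(CᵀC)^{−1} s_k‖₂ and f_k = C s_k, and suppose u_qᵀ f₀ > 0. Then there exist constants c₁, c₂ > 0 such that for all k ≥ 0, ‖f_k − σ_q u_q‖₂ ≤ c₁ (σ_q/σ_{q−1})^{2k} and |‖f_k‖₂ − σ_q| ≤ c₂ (σ_q/σ_{q−1})^{4k}. -/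
/-!
Write `s₀ = α v + w` with `α = ⟪v, s₀⟫ > 0` and `w ⊥ v`. The inverse `(CᵀC)⁻¹` preserves `v^⊥`
and, by the spectral gap, contracts it by `σ_{q-1}⁻²`, while it scales `v` by `σ_q⁻²`. Hence
`(CᵀC)⁻ᵏ s₀ = α σ_q⁻²ᵏ v + O(σ_{q-1}⁻²ᵏ)`, and its normalisation `s_k` satisfies
`‖s_k - v‖ = O((σ_q/σ_{q-1})²ᵏ)`; applying `C` gives the first bound. For the second, every unit
vector `s` satisfies `‖Cs‖² - σ_q² = ‖C(s - v)‖² - σ_q²‖s - v‖²`, which is quadratic in `‖s - v‖`.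
-/

open Matrix BigOperators

/-- Euclidean norm of a vector in ℝ^k. -/
noncomputable def vnorm {k : ℕ} (v : Fin k → ℝ) : ℝ := Real.sqrt (∑ i, (v i) ^ 2)

section Vnorm

variable {n : ℕ}

lemma vnorm_eq_norm_toLp (v : Fin n → ℝ) : vnorm v = ‖WithLp.toLp 2 v‖ := by
  simp [vnorm, EuclideanSpace.norm_eq, sq_abs]

lemma vnorm_sq (v : Fin n → ℝ) : vnorm v ^ 2 = v ⬝ᵥ v := by
  rw [vnorm_eq_norm_toLp, ← real_inner_self_eq_norm_sq, EuclideanSpace.inner_toLp_toLp]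
  simp

lemma dotProduct_self_eq_one {v : Fin n → ℝ} (h : vnorm v = 1) : v ⬝ᵥ v = 1 := by
  rw [← vnorm_sq, h, one_pow]

lemma dotProduct_le_vnorm_mul_vnorm (v w : Fin n → ℝ) : v ⬝ᵥ w ≤ vnorm v * vnorm w := by
  have h := real_inner_le_norm (WithLp.toLp 2 v) (WithLp.toLp 2 w)
  rwa [EuclideanSpace.inner_toLp_toLp, star_trivial, dotProduct_comm, ← vnorm_eq_norm_toLp,
    ← vnorm_eq_norm_toLp] at h

lemma vnorm_nonneg (v : Fin n → ℝ) : 0 ≤ vnorm v := Real.sqrt_nonneg _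

lemma ne_zero_of_vnorm_eq_one {v : Fin n → ℝ} (h : vnorm v = 1) : v ≠ 0 := by
  rintro rfl
  simp [vnorm] at h

lemma vnorm_smul (c : ℝ) (v : Fin n → ℝ) : vnorm (c • v) = |c| * vnorm v := by
  simp [vnorm_eq_norm_toLp, norm_smul]

lemma vnorm_eq_zero {v : Fin n → ℝ} : vnorm v = 0 ↔ v = 0 := by
  simp [vnorm_eq_norm_toLp]

lemma exists_vnorm_mulVec_le {m : ℕ} (C : Matrix (Fin m) (Fin n) ℝ) :
    ∃ M > 0, ∀ x, vnorm (C *ᵥ x) ≤ M * vnorm x := by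
  let T := LinearMap.toContinuousLinearMap (Matrix.toEuclideanLin C)
  refine ⟨‖T‖ + 1, by positivity, fun x => ?_⟩
  have h := T.le_opNorm (WithLp.toLp 2 x)
  rw [vnorm_eq_norm_toLp, vnorm_eq_norm_toLp]
  calc ‖WithLp.toLp 2 (C *ᵥ x)‖ = ‖T (WithLp.toLp 2 x)‖ := by simp [T]
    _ ≤ (‖T‖ + 1) * ‖WithLp.toLp 2 x‖ := h.trans (by gcongr; linarith)

end Vnorm

lemma norm_inv_norm_smul_sub_inv_norm_smul_le {E : Type*} [NormedAddCommGroup E]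
    [NormedSpace ℝ E] (x : E) {y : E} (hy : y ≠ 0) :
    ‖‖x‖⁻¹ • x - ‖y‖⁻¹ • y‖ ≤ 2 * ‖x - y‖ / ‖y‖ := by
  have hy' : 0 < ‖y‖ := norm_pos_iff.mpr hy
  have hscale : ‖(‖x‖⁻¹ - ‖y‖⁻¹) • x‖ ≤ ‖x - y‖ / ‖y‖ := by
    rcases eq_or_ne x 0 with rfl | hx
    · rw [smul_zero, norm_zero]; positivity
    have hx' : 0 < ‖x‖ := norm_pos_iff.mpr hx
    rw [norm_smul, Real.norm_eq_abs, inv_sub_inv hx'.ne' hy'.ne', abs_div, abs_mul,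
      abs_of_pos hx', abs_of_pos hy', le_div_iff₀ hy']
    calc |‖y‖ - ‖x‖| / (‖x‖ * ‖y‖) * ‖x‖ * ‖y‖ = |‖y‖ - ‖x‖| := by field_simp
      _ ≤ ‖x - y‖ := by rw [abs_sub_comm]; exact abs_norm_sub_norm_le x y
  calc ‖‖x‖⁻¹ • x - ‖y‖⁻¹ • y‖ = ‖(‖x‖⁻¹ - ‖y‖⁻¹) • x + ‖y‖⁻¹ • (x - y)‖ := by
        congr 1; module
    _ ≤ ‖x - y‖ / ‖y‖ + ‖x - y‖ / ‖y‖ := by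
        refine (norm_add_le _ _).trans (add_le_add hscale ?_)
        rw [norm_smul, norm_inv, norm_norm, inv_mul_eq_div]
    _ = 2 * ‖x - y‖ / ‖y‖ := by ring

lemma vnorm_inv_vnorm_smul_sub_le {n : ℕ} (x : Fin n → ℝ) {y : Fin n → ℝ} (hy : y ≠ 0) :
    vnorm ((vnorm x)⁻¹ • x - (vnorm y)⁻¹ • y) ≤ 2 * vnorm (x - y) / vnorm y := by
  simp only [vnorm_eq_norm_toLp, WithLp.toLp_sub, WithLp.toLp_smul]
  exact norm_inv_norm_smul_sub_inv_norm_smul_le _ (by simpa using hy)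

section NormalizedIteration

variable {n : ℕ} {s : ℕ → Fin n → ℝ}

lemma normalized_iterate_eq_pow_mulVec (B : Matrix (Fin n) (Fin n) ℝ) (hs0 : vnorm (s 0) = 1)
    (hrec : ∀ k, s (k + 1) = (1 / vnorm (B *ᵥ s k)) • B *ᵥ s k) (k : ℕ) :
    s k = (vnorm ((B ^ k) *ᵥ s 0))⁻¹ • (B ^ k) *ᵥ s 0 := by
  induction k with
  | zero => simp [hs0]
  | succ k ih =>
    set t := (B ^ k) *ᵥ s 0
    have ht : (B ^ (k + 1)) *ᵥ s 0 = B *ᵥ t := by rw [pow_succ', ← mulVec_mulVec]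
    rw [hrec, ih, ht, mulVec_smul, vnorm_smul, smul_smul]
    rcases eq_or_ne t 0 with h0 | h0
    · simp [h0]
    have ht0 := vnorm_eq_zero.not.mpr h0
    rw [abs_of_nonneg (inv_nonneg.mpr (vnorm_nonneg t))]
    congr 1
    field_simp

lemma vnorm_normalized_iterate_eq_one {B : Matrix (Fin n) (Fin n) ℝ} (hB : IsUnit B.det)
    (hs0 : vnorm (s 0) = 1)
    (hrec : ∀ k, s (k + 1) = (1 / vnorm (B *ᵥ s k)) • B *ᵥ s k) (k : ℕ) : vnorm (s k) = 1 := by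
  induction k with
  | zero => exact hs0
  | succ k ih =>
    have hBs : vnorm (B *ᵥ s k) ≠ 0 := vnorm_eq_zero.not.mpr fun h =>
      ne_zero_of_vnorm_eq_one ih (eq_zero_of_mulVec_eq_zero hB.ne_zero h)
    rw [hrec, vnorm_smul, abs_of_nonneg (by simpa using vnorm_nonneg _), one_div,
      inv_mul_cancel₀ hBs]

end NormalizedIteration

namespace Matrix.IsHermitian

variable {n : Type*} [Fintype n] {A : Matrix n n ℝ}

lemma dotProduct_mulVec_comm (hA : A.IsHermitian) (x y : n → ℝ) : x ⬝ᵥ A *ᵥ y = A *ᵥ x ⬝ᵥ y := by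
  have hT : Aᵀ = A := by rw [← conjTranspose_eq_transpose_of_trivial]; exact hA
  rw [dotProduct_mulVec, ← mulVec_transpose, hT]

lemma sum_eigenvectorBasis_dotProduct_mul [DecidableEq n] (hA : A.IsHermitian) (x y : n → ℝ) :
    ∑ i, (⇑(hA.eigenvectorBasis i) ⬝ᵥ x) * (⇑(hA.eigenvectorBasis i) ⬝ᵥ y) = x ⬝ᵥ y := by
  have h := (hA.eigenvectorBasis).sum_inner_mul_inner (WithLp.toLp 2 x) (WithLp.toLp 2 y)
  simp only [EuclideanSpace.inner_eq_star_dotProduct, star_trivial] at h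
  simpa [dotProduct_comm] using h

lemma dotProduct_mulVec_self_eq_sum [DecidableEq n] (hA : A.IsHermitian) (x : n → ℝ) :
    x ⬝ᵥ A *ᵥ x = ∑ i, hA.eigenvalues i * (⇑(hA.eigenvectorBasis i) ⬝ᵥ x) ^ 2 := by
  rw [← hA.sum_eigenvectorBasis_dotProduct_mul]
  refine Finset.sum_congr rfl fun i _ => ?_
  rw [hA.dotProduct_mulVec_comm, mulVec_eigenvectorBasis, smul_dotProduct, smul_eq_mul]
  ring

lemma hasEigenvalue_eigenvalues [DecidableEq n] (hA : A.IsHermitian) (i : n) :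
    Module.End.HasEigenvalue (toLin' A) (hA.eigenvalues i) :=
  Module.End.hasEigenvalue_of_hasEigenvector
    ⟨by rw [Module.End.mem_eigenspace_iff, toLin'_apply, mulVec_eigenvectorBasis],
     fun h => (hA.eigenvectorBasis).orthonormal.ne_zero i (by ext j; exact congrFun h j)⟩

theorem mul_dotProduct_self_le_of_orthogonal [DecidableEq n] (hA : A.IsHermitian)
    {lam mu : ℝ} {v : n → ℝ} (hv : A *ᵥ v = lam • v) (hv0 : v ≠ 0)
    (hsimple : Module.finrank ℝ (Module.End.eigenspace (toLin' A) lam) = 1)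
    (hrest : ∀ μ : ℝ, Module.End.HasEigenvalue (toLin' A) μ → μ ≠ lam → mu ≤ μ)
    (w : n → ℝ) (hw : v ⬝ᵥ w = 0) :
    mu * (w ⬝ᵥ w) ≤ w ⬝ᵥ A *ᵥ w := by
  have hvE : v ∈ Module.End.eigenspace (toLin' A) lam := by
    rw [Module.End.mem_eigenspace_iff, toLin'_apply, hv]
  rw [← hA.sum_eigenvectorBasis_dotProduct_mul, hA.dotProduct_mulVec_self_eq_sum, Finset.mul_sum]
  refine Finset.sum_le_sum fun i _ => ?_
  by_cases hi : hA.eigenvalues i = lam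
  -- the `lam`-eigenspace is the line through `v`, which is orthogonal to `w`
  · have hbE : ⇑(hA.eigenvectorBasis i) ∈ Module.End.eigenspace (toLin' A) lam := by
      rw [Module.End.mem_eigenspace_iff, toLin'_apply, ← hi, mulVec_eigenvectorBasis]
    obtain ⟨c, hc⟩ := (finrank_eq_one_iff_of_nonzero' (⟨v, hvE⟩ : Module.End.eigenspace _ _)
      (by simpa using hv0)).mp hsimple ⟨_, hbE⟩
    have hb : ⇑(hA.eigenvectorBasis i) = c • v := by simpa using (congrArg Subtype.val hc).symm
    rw [hb, smul_dotProduct, hw, smul_zero]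
    simp
  · have hmu := hrest _ (hA.hasEigenvalue_eigenvalues i) hi
    rw [← sq]
    exact mul_le_mul_of_nonneg_right hmu (sq_nonneg _)

end Matrix.IsHermitian

section InverseIteration

variable {n : ℕ}

lemma pow_mulVec_of_mulVec_eq_smul {B : Matrix (Fin n) (Fin n) ℝ} {c : ℝ} {v : Fin n → ℝ}
    (h : B *ᵥ v = c • v) (k : ℕ) : (B ^ k) *ᵥ v = c ^ k • v := by
  induction k with
  | zero => simp
  | succ k ih => rw [pow_succ', ← mulVec_mulVec, ih, mulVec_smul, h, smul_smul, pow_succ]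

lemma vnorm_pow_mulVec_le_of_contracting {B : Matrix (Fin n) (Fin n) ℝ}
    {P : (Fin n → ℝ) → Prop} {r : ℝ} (hr : 0 ≤ r)
    (hB : ∀ w, P w → P (B *ᵥ w) ∧ vnorm (B *ᵥ w) ≤ r * vnorm w)
    {w : Fin n → ℝ} (hw : P w) (k : ℕ) :
    P ((B ^ k) *ᵥ w) ∧ vnorm ((B ^ k) *ᵥ w) ≤ r ^ k * vnorm w := by
  induction k with
  | zero => simpa using hw
  | succ k ih =>
    rw [pow_succ', ← mulVec_mulVec]
    refine ⟨(hB _ ih.1).1, (hB _ ih.1).2.trans ?_⟩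
    rw [pow_succ', mul_assoc]
    exact mul_le_mul_of_nonneg_left ih.2 hr

lemma inv_mulVec_contracts_orthogonal {A : Matrix (Fin n) (Fin n) ℝ} (hA : A.IsHermitian)
    (hdet : IsUnit A.det) {lam mu : ℝ} (hlam : lam ≠ 0) (hmu : 0 < mu) {v : Fin n → ℝ}
    (hv : A *ᵥ v = lam • v) (hgap : ∀ w, v ⬝ᵥ w = 0 → mu * (w ⬝ᵥ w) ≤ w ⬝ᵥ A *ᵥ w)
    {w : Fin n → ℝ} (hw : v ⬝ᵥ w = 0) :
    v ⬝ᵥ A⁻¹ *ᵥ w = 0 ∧ vnorm (A⁻¹ *ᵥ w) ≤ mu⁻¹ * vnorm w := by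
  set u := A⁻¹ *ᵥ w
  have hAu : A *ᵥ u = w := by rw [mulVec_mulVec, mul_nonsing_inv _ hdet, one_mulVec]
  have hu : v ⬝ᵥ u = 0 := by
    have : lam * (v ⬝ᵥ u) = 0 := by
      rw [← smul_eq_mul, ← smul_dotProduct, ← hv, ← hA.dotProduct_mulVec_comm, hAu, hw]
    exact (mul_eq_zero.mp this).resolve_left hlam
  refine ⟨hu, ?_⟩
  have hquad : mu * vnorm u ^ 2 ≤ vnorm u * vnorm w := by
    calc mu * vnorm u ^ 2 ≤ u ⬝ᵥ A *ᵥ u := by rw [vnorm_sq]; exact hgap u hu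
      _ ≤ vnorm u * vnorm w := by rw [hAu]; exact dotProduct_le_vnorm_mul_vnorm u w
  rcases (vnorm_nonneg u).eq_or_lt with h0 | hpos
  · rw [← h0]; exact mul_nonneg (inv_nonneg.mpr hmu.le) (vnorm_nonneg w)
  · rw [inv_mul_eq_div, le_div_iff₀ hmu]
    nlinarith

theorem vnorm_inverse_iterate_sub_le {A : Matrix (Fin n) (Fin n) ℝ} (hA : A.IsHermitian)
    (hdet : IsUnit A.det) {lam mu : ℝ} (hlam : 0 < lam) (hmu : 0 < mu) {v : Fin n → ℝ}
    (hv : A *ᵥ v = lam • v) (hvn : vnorm v = 1)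
    (hgap : ∀ w, v ⬝ᵥ w = 0 → mu * (w ⬝ᵥ w) ≤ w ⬝ᵥ A *ᵥ w)
    {s : ℕ → Fin n → ℝ} (hs0 : vnorm (s 0) = 1)
    (hrec : ∀ k, s (k + 1) = (1 / vnorm (A⁻¹ *ᵥ s k)) • A⁻¹ *ᵥ s k) (hpos : 0 < v ⬝ᵥ s 0) :
    ∃ K > 0, ∀ k, vnorm (s k - v) ≤ K * (lam / mu) ^ k := by
  set α := v ⬝ᵥ s 0
  set w := s 0 - α • v
  have hvv := dotProduct_self_eq_one hvn
  have hw : v ⬝ᵥ w = 0 := by simp [w, α, dotProduct_sub, hvv]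
  have hinv : A⁻¹ *ᵥ v = lam⁻¹ • v := by
    rw [← inv_smul_smul₀ hlam.ne' (A⁻¹ *ᵥ v), ← mulVec_smul, ← hv, mulVec_mulVec,
      nonsing_inv_mul _ hdet, one_mulVec]
  have hdecay := vnorm_pow_mulVec_le_of_contracting (P := fun x => v ⬝ᵥ x = 0)
    (inv_nonneg.mpr hmu.le)
    (fun _ => inv_mulVec_contracts_orthogonal hA hdet hlam.ne' hmu hv hgap) hw
  refine ⟨2 * vnorm w / α + 1,
    add_pos_of_nonneg_of_pos (div_nonneg (mul_nonneg zero_le_two (vnorm_nonneg w)) hpos.le) one_pos, fun k => ?_⟩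
  set a := α * lam⁻¹ ^ k
  have ha : 0 < a := by positivity
  have ht : (A⁻¹ ^ k) *ᵥ s 0 = a • v + (A⁻¹ ^ k) *ᵥ w := by
    rw [show s 0 = α • v + w by simp [w], mulVec_add, mulVec_smul,
      pow_mulVec_of_mulVec_eq_smul hinv, smul_smul]
  have hav : v = (vnorm (a • v))⁻¹ • a • v := by
    rw [vnorm_smul, hvn, mul_one, abs_of_pos ha, inv_smul_smul₀ ha.ne']
  have hav0 : a • v ≠ 0 := smul_ne_zero ha.ne' (ne_zero_of_vnorm_eq_one hvn)
  calc vnorm (s k - v)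
      ≤ 2 * vnorm ((A⁻¹ ^ k) *ᵥ s 0 - a • v) / vnorm (a • v) := by
        have h := vnorm_inv_vnorm_smul_sub_le ((A⁻¹ ^ k) *ᵥ s 0) hav0
        rwa [← hav, ← normalized_iterate_eq_pow_mulVec _ hs0 hrec k] at h
    _ ≤ 2 * (mu⁻¹ ^ k * vnorm w) / a := by
        rw [ht, add_sub_cancel_left, vnorm_smul, hvn, mul_one, abs_of_pos ha]
        gcongr
        exact (hdecay k).2
    _ = 2 * vnorm w / α * (lam / mu) ^ k := by
        simp only [a, div_pow, inv_pow]
        field_simp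
    _ ≤ (2 * vnorm w / α + 1) * (lam / mu) ^ k := by
        gcongr
        linarith

end InverseIteration

section Gram

lemma mulVec_dotProduct_mulVec {m n α : Type*} [Fintype m] [Fintype n] [CommSemiring α]
    (C : Matrix m n α) (x y : n → α) : C *ᵥ x ⬝ᵥ C *ᵥ y = x ⬝ᵥ (Cᵀ * C) *ᵥ y := by
  rw [← mulVec_mulVec, dotProduct_mulVec x Cᵀ, vecMul_transpose]

lemma Matrix.isHermitian_transpose_mul_self {m n : Type*} [Fintype m] (C : Matrix m n ℝ) :
    (Cᵀ * C).IsHermitian := by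
  simpa [conjTranspose_eq_transpose_of_trivial] using isHermitian_conjTranspose_mul_self C

variable {m n : ℕ} (C : Matrix (Fin m) (Fin n) ℝ)

lemma vnorm_mulVec_sq (x : Fin n → ℝ) : vnorm (C *ᵥ x) ^ 2 = x ⬝ᵥ (Cᵀ * C) *ᵥ x := by
  rw [vnorm_sq, mulVec_dotProduct_mulVec]

lemma vnorm_mulVec_sq_sub_sq {σ : ℝ} {v s : Fin n → ℝ} (hv : (Cᵀ * C) *ᵥ v = σ ^ 2 • v)
    (hsn : vnorm s = 1) :
    vnorm (C *ᵥ s) ^ 2 - σ ^ 2 = vnorm (C *ᵥ (s - v)) ^ 2 - σ ^ 2 * vnorm (s - v) ^ 2 := by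
  have hA := C.isHermitian_transpose_mul_self
  replace hsn := dotProduct_self_eq_one hsn
  rw [vnorm_mulVec_sq, vnorm_mulVec_sq, vnorm_sq]
  simp only [mulVec_sub, sub_dotProduct, dotProduct_sub, hv, dotProduct_smul, smul_eq_mul,
    smul_dotProduct, hA.dotProduct_mulVec_comm v s]
  linear_combination σ ^ 2 * hsn

lemma abs_vnorm_mulVec_sub_le {M σ : ℝ} (hM : ∀ x, vnorm (C *ᵥ x) ≤ M * vnorm x)
    (hσ : 0 < σ) {v s : Fin n → ℝ} (hv : (Cᵀ * C) *ᵥ v = σ ^ 2 • v)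
    (hsn : vnorm s = 1) :
    |vnorm (C *ᵥ s) - σ| ≤ (M ^ 2 + σ ^ 2) / σ * vnorm (s - v) ^ 2 := by
  have hy := vnorm_nonneg (C *ᵥ s)
  have hsq : |vnorm (C *ᵥ s) ^ 2 - σ ^ 2| ≤ (M ^ 2 + σ ^ 2) * vnorm (s - v) ^ 2 := by
    rw [vnorm_mulVec_sq_sub_sq C hv hsn]
    have h1 : vnorm (C *ᵥ (s - v)) ^ 2 ≤ (M * vnorm (s - v)) ^ 2 :=
      pow_le_pow_left₀ (vnorm_nonneg _) (hM _) 2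
    rw [abs_le]
    constructor <;> nlinarith [sq_nonneg (vnorm (C *ᵥ (s - v))), sq_nonneg (vnorm (s - v))]
  rw [div_mul_eq_mul_div, le_div_iff₀ hσ]
  calc |vnorm (C *ᵥ s) - σ| * σ ≤ |vnorm (C *ᵥ s) - σ| * (vnorm (C *ᵥ s) + σ) := by
        gcongr; linarith
    _ = |vnorm (C *ᵥ s) ^ 2 - σ ^ 2| := by
        rw [sq_sub_sq, abs_mul, abs_of_nonneg (by linarith : 0 ≤ vnorm (C *ᵥ s) + σ), mul_comm]
    _ ≤ _ := hsq

end Gram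

theorem stmt_17 {p q : ℕ} (C : Matrix (Fin p) (Fin q) ℝ)
    (hC : IsUnit (Cᵀ * C).det)
    (σq σq1 : ℝ) (h0 : 0 < σq) (hlt : σq < σq1)
    (vq : Fin q → ℝ) (hvq : (Cᵀ * C).mulVec vq = σq ^ 2 • vq) (hvqn : vnorm vq = 1)
    (hsimple :
      Module.finrank ℝ (Module.End.eigenspace (Matrix.toLin' (Cᵀ * C)) (σq ^ 2)) = 1)
    (hrest : ∀ μ : ℝ, Module.End.HasEigenvalue (Matrix.toLin' (Cᵀ * C)) μ →
      μ ≠ σq ^ 2 → σq1 ^ 2 ≤ μ)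
    (uq : Fin p → ℝ) (huq : uq = (1 / σq) • C.mulVec vq)
    (s : ℕ → Fin q → ℝ) (hs0 : vnorm (s 0) = 1)
    (hrec : ∀ k : ℕ, s (k + 1) =
      (1 / vnorm ((Cᵀ * C)⁻¹.mulVec (s k))) • (Cᵀ * C)⁻¹.mulVec (s k))
    (hpos : uq ⬝ᵥ C.mulVec (s 0) > 0) :
    ∃ c1 > 0, ∃ c2 > 0, ∀ k : ℕ,
      vnorm (C.mulVec (s k) - σq • uq) ≤ c1 * (σq / σq1) ^ (2 * k) ∧
      |vnorm (C.mulVec (s k)) - σq| ≤ c2 * (σq / σq1) ^ (4 * k) := by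
  have hA := C.isHermitian_transpose_mul_self
  have hσq1 : 0 < σq1 := h0.trans hlt
  have hCvq : σq • uq = C *ᵥ vq := by rw [huq, smul_smul, mul_one_div_cancel h0.ne', one_smul]
  have hα : 0 < vq ⬝ᵥ s 0 := by
    have h : σq * (uq ⬝ᵥ C *ᵥ s 0) = σq ^ 2 * (vq ⬝ᵥ s 0) := by
      rw [← smul_eq_mul, ← smul_dotProduct, hCvq, mulVec_dotProduct_mulVec,
        hA.dotProduct_mulVec_comm, hvq, smul_dotProduct, smul_eq_mul]
    exact pos_of_mul_pos_right (h ▸ mul_pos h0 hpos) (sq_nonneg σq)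
  have hgap :=
    hA.mul_dotProduct_self_le_of_orthogonal hvq (ne_zero_of_vnorm_eq_one hvqn) hsimple hrest
  obtain ⟨K, hK0, hK⟩ := vnorm_inverse_iterate_sub_le hA hC (by positivity) (by positivity) hvq
    hvqn hgap hs0 hrec hα
  obtain ⟨M, hM0, hM⟩ := exists_vnorm_mulVec_le C
  have hρ : ∀ k, (σq ^ 2 / σq1 ^ 2) ^ k = (σq / σq1) ^ (2 * k) := fun k => by
    rw [← div_pow, pow_mul]
  refine ⟨M * K, by positivity, (M ^ 2 + σq ^ 2) / σq * K ^ 2, by positivity, fun k => ⟨?_, ?_⟩⟩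
  · calc vnorm (C *ᵥ s k - σq • uq) = vnorm (C *ᵥ (s k - vq)) := by rw [mulVec_sub, hCvq]
      _ ≤ M * (K * (σq ^ 2 / σq1 ^ 2) ^ k) := (hM _).trans (by gcongr; exact hK k)
      _ = M * K * (σq / σq1) ^ (2 * k) := by rw [hρ]; ring
  · calc |vnorm (C *ᵥ s k) - σq| ≤ (M ^ 2 + σq ^ 2) / σq * vnorm (s k - vq) ^ 2 :=
          abs_vnorm_mulVec_sub_le C hM h0 hvq
            (vnorm_normalized_iterate_eq_one (isUnit_nonsing_inv_det _ hC) hs0 hrec k)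
      _ ≤ (M ^ 2 + σq ^ 2) / σq * (K * (σq ^ 2 / σq1 ^ 2) ^ k) ^ 2 := by
          gcongr
          · exact vnorm_nonneg _
          · exact hK k
      _ = (M ^ 2 + σq ^ 2) / σq * K ^ 2 * (σq / σq1) ^ (4 * k) := by
          rw [hρ, show 4 * k = 2 * k * 2 by ring, pow_mul]; ring
end
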